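/- arXiv:2506.20429 — 5 statements merged into one kernel-verified Lean document; each statement's English description precedes it below -/
import Mathlib

section
/- Let N : ℝ² → ℝ be a functional with N(z) ≥ 0 for all z, N(z) > 0 for z ≠ (0,0), and N(t•z) = t·N(z) for all t ≥ 0 and z ∈ ℝ² (positive homogeneity). Define Q(z) = N(z)²/N(z⊛z) for z ≠ (0,0). Let p, q be real numbers with p ≠ 0 and q > 0. If z = (x, y) ∈ ℝ² with y ≠ 0 satisfies the equation Q(z)•(z⊛z) + p•z + q•(1,0) = (0,0), then x = -p/(2·Q(z)), y² = q/Q(z) - p²/(4·Q(z)²), and (x + q/p)² + y² = (q/p)², i.e. z lies on the Euclidean circle of radius |q/p| centered at (-q/p, 0). -/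
/-- Circular vector-valued vector product on ℝ². -/
def circMul (z w : ℝ × ℝ) : ℝ × ℝ :=
  (z.1 * w.1 - z.2 * w.2, z.1 * w.2 + w.1 * z.2)

/-- `Q` associated with a phs-functional `N`. -/
noncomputable def Qfun (N : ℝ × ℝ → ℝ) (z : ℝ × ℝ) : ℝ := (N z) ^ 2 / N (circMul z z)

/-!
Since `⊛` is complex multiplication, `z = x + iy` is a non-real root of the real quadratic
`Q w² + p w + q`, with the coefficient `Q = Q(z)` held fixed. The imaginary part
`(2Qx + p) y = 0` of the equation pins `x` to the vertex `-p/(2Q)`; substituting `Qx = -p/2`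
into the real part gives `Q y² = p x / 2 + q`, and multiplying by `2x` turns this into
`p (x² + y²) + 2 q x = 0`, the circle.
-/

lemma circMul_self (x y : ℝ) : circMul (x, y) (x, y) = (x ^ 2 - y ^ 2, 2 * x * y) := by
  simp only [circMul, Prod.mk.injEq]
  constructor <;> ring

lemma smul_circMul_self_add_eq_zero_iff {a p q x y : ℝ} :
    a • circMul (x, y) (x, y) + p • (x, y) + q • ((1 : ℝ), (0 : ℝ)) = (0, 0) ↔
      a * (x ^ 2 - y ^ 2) + p * x + q = 0 ∧ a * (2 * x * y) + p * y = 0 := by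
  simp [circMul_self, Prod.ext_iff]

section NonrealRoot

variable {a p q x y : ℝ}

lemma two_mul_mul_add_eq_zero_of_im_eq_zero (hy : y ≠ 0) (him : a * (2 * x * y) + p * y = 0) :
    2 * a * x + p = 0 :=
  mul_right_cancel₀ hy (by linear_combination him)

lemma ne_zero_of_two_mul_mul_add_eq_zero (hp : p ≠ 0) (hv : 2 * a * x + p = 0) : a ≠ 0 := by
  rintro rfl
  exact hp (by simpa using hv)

lemma eq_neg_div_of_two_mul_mul_add_eq_zero (ha : a ≠ 0) (hv : 2 * a * x + p = 0) :
    x = -p / (2 * a) := by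
  field_simp
  linarith

lemma sq_eq_of_re_eq_zero (ha : a ≠ 0) (hre : a * (x ^ 2 - y ^ 2) + p * x + q = 0)
    (hv : 2 * a * x + p = 0) : y ^ 2 = q / a - p ^ 2 / (4 * a ^ 2) := by
  field_simp
  linear_combination (-4 * a) * hre + (2 * a * x + p) * hv

lemma circle_of_re_eq_zero (hp : p ≠ 0) (hre : a * (x ^ 2 - y ^ 2) + p * x + q = 0)
    (hv : 2 * a * x + p = 0) : (x + q / p) ^ 2 + y ^ 2 = (q / p) ^ 2 := by
  have hcircle : p * (x ^ 2 + y ^ 2) + 2 * q * x = 0 := by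
    linear_combination 2 * x * hre - (x ^ 2 - y ^ 2) * hv
  field_simp
  linear_combination p * hcircle

end NonrealRoot

theorem stmt_4_general (N : ℝ × ℝ → ℝ)
    (p q : ℝ) (hp : p ≠ 0) (x y : ℝ) (hy : y ≠ 0)
    (hz : Qfun N (x, y) • circMul (x, y) (x, y) + p • ((x : ℝ), (y : ℝ))
        + q • ((1 : ℝ), (0 : ℝ)) = (0, 0)) :
    x = -p / (2 * Qfun N (x, y)) ∧
      y ^ 2 = q / Qfun N (x, y) - p ^ 2 / (4 * (Qfun N (x, y)) ^ 2) ∧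
      (x + q / p) ^ 2 + y ^ 2 = (q / p) ^ 2 := by
  obtain ⟨hre, him⟩ := smul_circMul_self_add_eq_zero_iff.mp hz
  have hv := two_mul_mul_add_eq_zero_of_im_eq_zero hy him
  have hQ := ne_zero_of_two_mul_mul_add_eq_zero hp hv
  exact ⟨eq_neg_div_of_two_mul_mul_add_eq_zero hQ hv, sq_eq_of_re_eq_zero hQ hre hv,
    circle_of_re_eq_zero hp hre hv⟩

theorem stmt_4 (N : ℝ × ℝ → ℝ)
    (hN0 : ∀ z, 0 ≤ N z) (hNpos : ∀ z : ℝ × ℝ, z ≠ (0, 0) → 0 < N z)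
    (hNhom : ∀ (t : ℝ), 0 ≤ t → ∀ z : ℝ × ℝ, N (t • z) = t * N z)
    (p q : ℝ) (hp : p ≠ 0) (hq : q > 0) (x y : ℝ) (hy : y ≠ 0)
    (hz : Qfun N (x, y) • circMul (x, y) (x, y) + p • ((x : ℝ), (y : ℝ))
        + q • ((1 : ℝ), (0 : ℝ)) = (0, 0)) :
    x = -p / (2 * Qfun N (x, y)) ∧
      y ^ 2 = q / Qfun N (x, y) - p ^ 2 / (4 * (Qfun N (x, y)) ^ 2) ∧
      (x + q / p) ^ 2 + y ^ 2 = (q / p) ^ 2 :=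
  stmt_4_general N p q hp x y hy hz
end

section
/- Let N : ℝ² → ℝ be a functional with N(z) ≥ 0 for all z, N(z) > 0 for z ≠ (0,0), and N(t•z) = t·N(z) for all t ≥ 0. For φ ∈ ℝ write N(φ) = N(cos φ, sin φ). Let p, q be real numbers with q > 0. If r > 0 and φ ∈ ℝ with sin φ ≠ 0 are such that z = (r·cos φ, r·sin φ) satisfies Q(z)•(z⊛z) + p•z + q•(1,0) = (0,0), where Q(z) = N(z)²/N(z⊛z), then N(φ)²·cos²φ / N(2φ) = p²/(4q) and r = √(q·N(2φ)) / N(φ). -/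
/-- `N` evaluated on the unit circle at angle `φ`: `N(φ) = N(cos φ, sin φ)`. -/
noncomputable def Nang (N : ℝ × ℝ → ℝ) (φ : ℝ) : ℝ := N (Real.cos φ, Real.sin φ)

/-!
In polar coordinates `z = r(cos φ, sin φ)` one has `z ⊛ z = r²(cos 2φ, sin 2φ)`, so by homogeneity
`Q(z) = N(φ)²/N(2φ)` does not depend on `r`. The second coordinate of `f(z) = 0`, divided by
`r sin φ ≠ 0`, gives `p = -2 Q r cos φ`; substituting into the first coordinate gives `Q r² = q`.
Both claimed identities are rearrangements of these two equations.
-/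

open Real

lemma circMul_self_polar (r φ : ℝ) :
    circMul (r * cos φ, r * sin φ) (r * cos φ, r * sin φ) = r ^ 2 • (cos (2 * φ), sin (2 * φ)) := by
  simp only [circMul, Prod.smul_mk, smul_eq_mul, cos_two_mul, sin_two_mul, Prod.mk.injEq]
  exact ⟨by linear_combination -r ^ 2 * sin_sq_add_cos_sq φ, by ring⟩

lemma Nang_pos {N : ℝ × ℝ → ℝ} (hNpos : ∀ z : ℝ × ℝ, z ≠ (0, 0) → 0 < N z) (φ : ℝ) :
    0 < Nang N φ :=
  hNpos _ fun h => by
    obtain ⟨hc, hs⟩ := Prod.mk.inj h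
    simpa [hc, hs] using sin_sq_add_cos_sq φ

section Homogeneous

variable {N : ℝ × ℝ → ℝ} (hNhom : ∀ (t : ℝ), 0 ≤ t → ∀ z : ℝ × ℝ, N (t • z) = t * N z)
include hNhom

lemma apply_polar {r : ℝ} (hr : 0 ≤ r) (φ : ℝ) :
    N (r * cos φ, r * sin φ) = r * Nang N φ := by
  simpa [Nang] using hNhom r hr (cos φ, sin φ)

lemma Qfun_polar {r : ℝ} (hr : 0 < r) (φ : ℝ) :
    Qfun N (r * cos φ, r * sin φ) = Nang N φ ^ 2 / Nang N (2 * φ) := by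
  rw [Qfun, circMul_self_polar, apply_polar hNhom hr.le, hNhom _ (by positivity), mul_pow,
    mul_div_mul_left _ _ (by positivity)]
  rfl

end Homogeneous

lemma eq_of_polar_root {Q p q r φ : ℝ} (hr : r ≠ 0) (hφ : sin φ ≠ 0)
    (h : Q • circMul (r * cos φ, r * sin φ) (r * cos φ, r * sin φ) + p • (r * cos φ, r * sin φ)
      + q • ((1 : ℝ), (0 : ℝ)) = (0, 0)) :
    Q * r ^ 2 = q ∧ p = -2 * Q * r * cos φ := by
  rw [circMul_self_polar] at h
  simp only [Prod.smul_mk, smul_eq_mul, Prod.mk_add_mk, Prod.mk.injEq, cos_two_mul,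
    sin_two_mul] at h
  obtain ⟨h_fst, h_snd⟩ := h
  have hp : p = -2 * Q * r * cos φ := by
    have : (r * sin φ) * (p + 2 * Q * r * cos φ) = 0 := by linear_combination h_snd
    linear_combination (mul_eq_zero.mp this).resolve_left (mul_ne_zero hr hφ)
  exact ⟨by linear_combination -h_fst + r * cos φ * hp, hp⟩

theorem stmt_7_general (N : ℝ × ℝ → ℝ)
    (hNpos : ∀ z : ℝ × ℝ, z ≠ (0, 0) → 0 < N z)
    (hNhom : ∀ (t : ℝ), 0 ≤ t → ∀ z : ℝ × ℝ, N (t • z) = t * N z)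
    (p q : ℝ) (r φ : ℝ) (hr : r > 0) (hφ : Real.sin φ ≠ 0)
    (hz : Qfun N (r * Real.cos φ, r * Real.sin φ) •
          circMul (r * Real.cos φ, r * Real.sin φ) (r * Real.cos φ, r * Real.sin φ)
        + p • ((r * Real.cos φ : ℝ), (r * Real.sin φ : ℝ))
        + q • ((1 : ℝ), (0 : ℝ)) = (0, 0)) :
    (Nang N φ) ^ 2 * (Real.cos φ) ^ 2 / Nang N (2 * φ) = p ^ 2 / (4 * q) ∧
      r = Real.sqrt (q * Nang N (2 * φ)) / Nang N φ := by
  have hA := Nang_pos hNpos φ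
  have hB := Nang_pos hNpos (2 * φ)
  rw [Qfun_polar hNhom hr] at hz
  obtain ⟨rfl, rfl⟩ := eq_of_polar_root hr.ne' hφ hz
  refine ⟨by field_simp; ring, ?_⟩
  rw [show Nang N φ ^ 2 / Nang N (2 * φ) * r ^ 2 * Nang N (2 * φ) = (r * Nang N φ) ^ 2 by
    field_simp, sqrt_sq (by positivity)]
  field_simp

theorem stmt_7 (N : ℝ × ℝ → ℝ)
    (hN0 : ∀ z, 0 ≤ N z) (hNpos : ∀ z : ℝ × ℝ, z ≠ (0, 0) → 0 < N z)
    (hNhom : ∀ (t : ℝ), 0 ≤ t → ∀ z : ℝ × ℝ, N (t • z) = t * N z)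
    (p q : ℝ) (hq : q > 0) (r φ : ℝ) (hr : r > 0) (hφ : Real.sin φ ≠ 0)
    (hz : Qfun N (r * Real.cos φ, r * Real.sin φ) •
          circMul (r * Real.cos φ, r * Real.sin φ) (r * Real.cos φ, r * Real.sin φ)
        + p • ((r * Real.cos φ : ℝ), (r * Real.sin φ : ℝ))
        + q • ((1 : ℝ), (0 : ℝ)) = (0, 0)) :
    (Nang N φ) ^ 2 * (Real.cos φ) ^ 2 / Nang N (2 * φ) = p ^ 2 / (4 * q) ∧
      r = Real.sqrt (q * Nang N (2 * φ)) / Nang N φ :=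
  stmt_7_general N hNpos hNhom p q r φ hr hφ hz
end

section
/- Let N : ℝ² → ℝ be a functional with N(z) ≥ 0 for all z, N(z) > 0 for z ≠ (0,0), and N(t•z) = t·N(z) for all t ≥ 0. Define z₁ ∘ z₂ = (N(z₁)·N(z₂)/N(z₁ ⊛ z₂)) • (z₁ ⊛ z₂) for z₁, z₂ ≠ (0,0). Then ∘ is associative on nonzero vectors: for all nonzero z₁, z₂, z₃ ∈ ℝ², (z₁ ∘ z₂) ∘ z₃ = z₁ ∘ (z₂ ∘ z₃). -/
/-- Vector-valued vector product with respect to the phs-functional `N`. -/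
noncomputable def nMul (N : ℝ × ℝ → ℝ) (z₁ z₂ : ℝ × ℝ) : ℝ × ℝ :=
  (N z₁ * N z₂ / N (circMul z₁ z₂)) • circMul z₁ z₂

open Complex

lemma circMul_eq_complex_mul (z w : ℝ × ℝ) :
    circMul z w = equivRealProdLm (equivRealProdLm.symm z * equivRealProdLm.symm w) := by
  ext <;> simp [circMul, equivRealProdLm_symm_apply]; ring

lemma circMul_assoc (z w v : ℝ × ℝ) : circMul (circMul z w) v = circMul z (circMul w v) := by
  simp only [circMul_eq_complex_mul, LinearEquiv.symm_apply_apply, mul_assoc]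

lemma circMul_smul_left (t : ℝ) (z w : ℝ × ℝ) : circMul (t • z) w = t • circMul z w := by
  simp only [circMul_eq_complex_mul, map_smul, smul_mul_assoc]

lemma circMul_smul_right (t : ℝ) (z w : ℝ × ℝ) : circMul z (t • w) = t • circMul z w := by
  simp only [circMul_eq_complex_mul, map_smul, mul_smul_comm]

lemma circMul_ne_zero {z w : ℝ × ℝ} (hz : z ≠ 0) (hw : w ≠ 0) : circMul z w ≠ 0 := by
  rw [circMul_eq_complex_mul, map_ne_zero_iff _ equivRealProdLm.injective]
  exact mul_ne_zero (by simpa using hz) (by simpa using hw)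

/-- The point where the ray through `x` meets the unit sphere of `N`. -/
noncomputable def nNormalize (N : ℝ × ℝ → ℝ) (x : ℝ × ℝ) : ℝ × ℝ := (N x)⁻¹ • x

lemma nMul_eq_smul_nNormalize (N : ℝ × ℝ → ℝ) (z w : ℝ × ℝ) :
    nMul N z w = (N z * N w) • nNormalize N (circMul z w) := by
  rw [nMul, nNormalize, smul_smul, div_eq_mul_inv]

lemma nNormalize_smul {N : ℝ × ℝ → ℝ} (hhom : ∀ t : ℝ, 0 ≤ t → ∀ z : ℝ × ℝ, N (t • z) = t * N z)
    {t : ℝ} (ht : 0 < t) (x : ℝ × ℝ) : nNormalize N (t • x) = nNormalize N x := by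
  rw [nNormalize, nNormalize, hhom t ht.le, smul_smul, mul_inv_rev, inv_mul_cancel_right₀ ht.ne']

lemma nMul_eq_pos_smul_circMul {N : ℝ × ℝ → ℝ} (hpos : ∀ z : ℝ × ℝ, z ≠ 0 → 0 < N z)
    {z w : ℝ × ℝ} (hz : z ≠ 0) (hw : w ≠ 0) : ∃ t : ℝ, 0 < t ∧ nMul N z w = t • circMul z w :=
  ⟨_, by positivity [hpos z hz, hpos w hw, hpos _ (circMul_ne_zero hz hw)], rfl⟩

lemma apply_nMul {N : ℝ × ℝ → ℝ} (hpos : ∀ z : ℝ × ℝ, z ≠ 0 → 0 < N z)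
    (hhom : ∀ t : ℝ, 0 ≤ t → ∀ z : ℝ × ℝ, N (t • z) = t * N z)
    {z w : ℝ × ℝ} (hz : z ≠ 0) (hw : w ≠ 0) : N (nMul N z w) = N z * N w := by
  have hc := hpos _ (circMul_ne_zero hz hw)
  rw [nMul, hhom _ (by positivity [hpos z hz, hpos w hw]), div_mul_cancel₀ _ hc.ne']

theorem stmt_10_general (N : ℝ × ℝ → ℝ)
    (hNpos : ∀ z : ℝ × ℝ, z ≠ (0, 0) → 0 < N z)
    (hNhom : ∀ (t : ℝ), 0 ≤ t → ∀ z : ℝ × ℝ, N (t • z) = t * N z)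
    (z₁ z₂ z₃ : ℝ × ℝ) (hz₁ : z₁ ≠ (0, 0)) (hz₂ : z₂ ≠ (0, 0)) (hz₃ : z₃ ≠ (0, 0)) :
    nMul N (nMul N z₁ z₂) z₃ = nMul N z₁ (nMul N z₂ z₃) := by
  obtain ⟨s, hs, hs_eq⟩ := nMul_eq_pos_smul_circMul hNpos hz₁ hz₂
  obtain ⟨t, ht, ht_eq⟩ := nMul_eq_pos_smul_circMul hNpos hz₂ hz₃
  rw [nMul_eq_smul_nNormalize N (nMul N z₁ z₂), nMul_eq_smul_nNormalize N z₁ (nMul N z₂ z₃),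
    apply_nMul hNpos hNhom hz₁ hz₂, apply_nMul hNpos hNhom hz₂ hz₃, hs_eq, ht_eq,
    circMul_smul_left, circMul_smul_right,
    nNormalize_smul hNhom hs, nNormalize_smul hNhom ht, circMul_assoc, mul_assoc]

theorem stmt_10 (N : ℝ × ℝ → ℝ)
    (hN0 : ∀ z, 0 ≤ N z) (hNpos : ∀ z : ℝ × ℝ, z ≠ (0, 0) → 0 < N z)
    (hNhom : ∀ (t : ℝ), 0 ≤ t → ∀ z : ℝ × ℝ, N (t • z) = t * N z)
    (z₁ z₂ z₃ : ℝ × ℝ) (hz₁ : z₁ ≠ (0, 0)) (hz₂ : z₂ ≠ (0, 0)) (hz₃ : z₃ ≠ (0, 0)) :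
    nMul N (nMul N z₁ z₂) z₃ = nMul N z₁ (nMul N z₂ z₃) :=
  stmt_10_general N hNpos hNhom z₁ z₂ z₃ hz₁ hz₂ hz₃
end

section
/- Let p, q be real numbers with q - p²/4 > 0. Then the vector equation zⓗ² + p•z + q•(1,0) = (0,0), where zⓗ² = (x² + y², 2xy) for z = (x,y), has no solution z ∈ ℝ². -/
/-- Hyperbolic vector-valued vector product on ℝ². -/
def hypMul (z w : ℝ × ℝ) : ℝ × ℝ :=
  (z.1 * w.1 + z.2 * w.2, z.1 * w.2 + w.1 * z.2)

theorem stmt_11 (p q : ℝ) (hpq : q - p ^ 2 / 4 > 0) :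
    ¬ ∃ z : ℝ × ℝ, hypMul z z + p • z + q • ((1 : ℝ), (0 : ℝ)) = (0, 0) := by
  rintro ⟨⟨x, y⟩, h⟩
  simp only [hypMul, Prod.ext_iff, Prod.fst_add, Prod.snd_add, Prod.smul_fst, Prod.smul_snd,
    smul_eq_mul] at h
  obtain ⟨h1, _⟩ := h
  nlinarith [sq_nonneg (x + p/2), sq_nonneg y]
end

section
/- Let p, q be real numbers with p²/4 - q ≥ 0. Then a vector z = (x,y) ∈ ℝ² satisfies zⓗ² + p•z + q•(1,0) = (0,0) if and only if z is one of the four vectors (-p/2 + √(p²/4 - q), 0), (-p/2 - √(p²/4 - q), 0), (-p/2, √(p²/4 - q)), (-p/2, -√(p²/4 - q)). -/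
theorem stmt_12 (p q : ℝ) (hpq : p ^ 2 / 4 - q ≥ 0) (z : ℝ × ℝ) :
    hypMul z z + p • z + q • ((1 : ℝ), (0 : ℝ)) = (0, 0) ↔
      z = (-p / 2 + Real.sqrt (p ^ 2 / 4 - q), 0) ∨
        z = (-p / 2 - Real.sqrt (p ^ 2 / 4 - q), 0) ∨
        z = (-p / 2, Real.sqrt (p ^ 2 / 4 - q)) ∨
        z = (-p / 2, -Real.sqrt (p ^ 2 / 4 - q)) := by
  obtain ⟨x, y⟩ := z
  have hs : Real.sqrt (p ^ 2 / 4 - q) ^ 2 = p ^ 2 / 4 - q := Real.sq_sqrt hpq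
  simp only [hypMul, Prod.ext_iff, Prod.mk_add_mk, Prod.smul_mk, smul_eq_mul,
    Prod.mk.injEq] at *
  constructor
  · rintro ⟨h1, h2⟩
    have h2' : y * (2 * x + p) = 0 := by ring_nf; linarith [h2]
    rcases mul_eq_zero.mp h2' with hy | hx
    · subst hy
      have hfac : (x - (-p / 2 + Real.sqrt (p ^ 2 / 4 - q))) *
          (x - (-p / 2 - Real.sqrt (p ^ 2 / 4 - q))) = 0 := by nlinarith
      rcases mul_eq_zero.mp hfac with h | h
      · left; constructor <;> linarith
      · right; left; constructor <;> linarith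
    · have hx' : x = -p / 2 := by linarith
      subst hx'
      have hfac : (y - Real.sqrt (p ^ 2 / 4 - q)) * (y + Real.sqrt (p ^ 2 / 4 - q)) = 0 := by
        nlinarith
      rcases mul_eq_zero.mp hfac with h | h
      · right; right; left; constructor <;> linarith
      · right; right; right; constructor <;> linarith
  · rintro (⟨hx, hy⟩ | ⟨hx, hy⟩ | ⟨hx, hy⟩ | ⟨hx, hy⟩) <;> subst hx <;> subst hy <;>
      constructor <;> nlinarith
end
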